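/- arXiv:2505.19991 — 4 statements merged into one kernel-verified Lean document; each statement's English description precedes it below -/
import Mathlib

section
/- The infinite product (−q;q)∞²/(q;q)∞ equals the product over n ≥ 1 of (1 + qⁿ)^(3 + ν₂(n)), where ν₂(n) is the 2-adic valuation of n. -/
open PowerSeries Finset

/-- The power series `∏_{k=0}^∞ g k`, defined coefficientwise via stabilized
finite partial products (valid when `g k ≡ 1` modulo degree `> k`). -/
noncomputable def iProd (g : ℕ → PowerSeries ℤ) : PowerSeries ℤ :=
  PowerSeries.mk fun n => PowerSeries.coeff n (∏ k ∈ Finset.range (n + 1), g k)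

/-- `(q^j; q^j)_∞ = ∏_{k≥1} (1 - q^{jk})` as a formal power series. -/
noncomputable def F (j : ℕ) : PowerSeries ℤ :=
  iProd fun k => 1 - (PowerSeries.X : PowerSeries ℤ) ^ (j * (k + 1))

/-- `(-q; q)_∞ = ∏_{k≥1} (1 + q^k)` as a formal power series. -/
noncomputable def Fneg : PowerSeries ℤ :=
  iProd fun k => 1 + (PowerSeries.X : PowerSeries ℤ) ^ (k + 1)

/-- Multiplicative inverse of a power series with constant coefficient `1`. -/
noncomputable def psInv (f : PowerSeries ℤ) : PowerSeries ℤ := PowerSeries.invOfUnit f 1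

/-! Let `V = ∏_{n ≥ 1} (1 + qⁿ)^ν₂(n)`. Substituting `q ↦ q²` turns `(−q;q)∞ · V` into
`∏ (1 + q^{2n})^{1 + ν₂(n)} = ∏ (1 + q^{2n})^{ν₂(2n)}`, which is `V` again because `ν₂` vanishes
at odd `n`. Since also `(−q;q)∞ (q;q)∞ = (q²;q²)∞`, the series `H = (−q;q)∞ · V · (q;q)∞` is
invariant under `q ↦ q²`; having constant term `1`, it equals `1`. Hence
`(−q;q)∞² / (q;q)∞ = (−q;q)∞³ · V`, which is the product on the right. -/

section DvdSubOne

variable {R : Type*} [CommRing R]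

theorem dvd_mul_sub_one {d a b : R} (ha : d ∣ a - 1) (hb : d ∣ b - 1) : d ∣ a * b - 1 := by
  rw [show a * b - 1 = a * (b - 1) + (a - 1) by ring]
  exact dvd_add (dvd_mul_of_dvd_right hb a) ha

theorem dvd_prod_sub_one {ι : Type*} {d : R} {s : Finset ι} {f : ι → R}
    (h : ∀ i ∈ s, d ∣ f i - 1) : d ∣ ∏ i ∈ s, f i - 1 :=
  Finset.prod_induction f (fun x => d ∣ x - 1) (fun _ _ => dvd_mul_sub_one) (by simp) h

theorem PowerSeries.coeff_eq_of_X_pow_dvd_sub {n : ℕ} {a b : R⟦X⟧}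
    (h : X ^ (n + 1) ∣ a - b) : coeff n a = coeff n b := by
  rw [← sub_eq_zero, ← map_sub]
  exact X_pow_dvd_iff.mp h n n.lt_succ_self

theorem PowerSeries.coeff_prod_range_eq_of_le {g : ℕ → R⟦X⟧} {n m₁ m₂ : ℕ} (hm : m₁ ≤ m₂)
    (hg : ∀ k ∈ Ico m₁ m₂, X ^ (n + 1) ∣ g k - 1) :
    coeff n (∏ k ∈ range m₂, g k) = coeff n (∏ k ∈ range m₁, g k) := by
  apply coeff_eq_of_X_pow_dvd_sub
  rw [← prod_range_mul_prod_Ico g hm, ← mul_sub_one]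
  exact dvd_mul_of_dvd_right (dvd_prod_sub_one hg) _

end DvdSubOne

/-- The condition under which the partial products defining `iProd g` stabilise coefficientwise,
so that `iProd g` is a genuine infinite product. -/
def IProdAdmissible (g : ℕ → PowerSeries ℤ) : Prop :=
  ∀ k, (X : PowerSeries ℤ) ^ (k + 1) ∣ g k - 1

namespace IProdAdmissible

variable {g h : ℕ → PowerSeries ℤ}

theorem mul (hg : IProdAdmissible g) (hh : IProdAdmissible h) :
    IProdAdmissible fun k => g k * h k := fun k =>
  dvd_mul_sub_one (hg k) (hh k)

theorem pow (hg : IProdAdmissible g) (e : ℕ → ℕ) : IProdAdmissible fun k => g k ^ e k :=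
  fun k => (hg k).trans (sub_one_dvd_pow_sub_one _ _)

theorem one_add_X_pow {e : ℕ → ℕ} (he : ∀ k, k < e k) :
    IProdAdmissible fun k => 1 + X ^ e k := fun k => by
  simpa using pow_dvd_pow X (he k)

theorem one_sub_X_pow {e : ℕ → ℕ} (he : ∀ k, k < e k) :
    IProdAdmissible fun k => 1 - X ^ e k := fun k => by
  simpa using pow_dvd_pow X (he k)

end IProdAdmissible

section IProd

variable {g h : ℕ → PowerSeries ℤ}

theorem coeff_iProd (g : ℕ → PowerSeries ℤ) (n : ℕ) :
    coeff n (iProd g) = coeff n (∏ k ∈ range (n + 1), g k) :=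
  coeff_mk n _

theorem constantCoeff_iProd (g : ℕ → PowerSeries ℤ) :
    constantCoeff (iProd g) = constantCoeff (g 0) := by
  rw [← coeff_zero_eq_constantCoeff_apply, coeff_iProd, prod_range_one,
    coeff_zero_eq_constantCoeff_apply]

theorem coeff_iProd_of_lt (hg : IProdAdmissible g) {n m : ℕ} (hm : n < m) :
    coeff n (iProd g) = coeff n (∏ k ∈ range m, g k) := by
  rw [coeff_iProd, coeff_prod_range_eq_of_le hm]
  intro k hk
  exact (pow_dvd_pow X (by simp at hk; omega)).trans (hg k)

theorem iProd_mul (hg : IProdAdmissible g) (hh : IProdAdmissible h) :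
    iProd (fun k => g k * h k) = iProd g * iProd h := by
  ext n
  rw [coeff_iProd, prod_mul_distrib, coeff_mul, coeff_mul]
  refine sum_congr rfl fun p hp => ?_
  rw [HasAntidiagonal.mem_antidiagonal] at hp
  rw [coeff_iProd_of_lt hg (m := n + 1) (by omega), coeff_iProd_of_lt hh (m := n + 1) (by omega)]

theorem iProd_one : iProd (fun _ => 1) = 1 := by
  ext n
  simp [coeff_iProd]

theorem iProd_pow (hg : IProdAdmissible g) (e : ℕ) :
    iProd (fun k => g k ^ e) = iProd g ^ e := by
  induction e with
  | zero => simpa using iProd_one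
  | succ e ih => simp_rw [pow_succ, iProd_mul (hg.pow fun _ => e) hg, ih]

theorem expand_iProd (p : ℕ) (hp : p ≠ 0) (hg : IProdAdmissible g) :
    expand p hp (iProd g) = iProd fun k => expand p hp (g k) := by
  ext n
  rw [coeff_iProd, ← map_prod, coeff_expand, coeff_expand]
  split_ifs
  · exact coeff_iProd_of_lt hg (Nat.div_le_self n p |>.trans_lt n.lt_succ_self)
  · rfl

end IProd

theorem PowerSeries.eq_C_of_expand_eq_self {R : Type*} [CommRing R] {p : ℕ} (hp : 1 < p)
    {f : R⟦X⟧} (hf : expand p (by omega) f = f) : f = C (constantCoeff f) := by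
  ext n
  induction n using Nat.strong_induction_on with
  | _ n ih =>
    rcases Nat.eq_zero_or_pos n with rfl | hn
    · simp
    rw [coeff_C, if_neg hn.ne', ← hf, coeff_expand]
    split_ifs with hpn
    · rw [ih (n / p) (Nat.div_lt_self hn hp), coeff_C, if_neg]
      exact (Nat.div_pos (Nat.le_of_dvd hn hpn) (by omega)).ne'
    · rfl

theorem prod_range_two_mul_pow_padicValNat {M : Type*} [CommMonoid M] (f : ℕ → M) (m : ℕ) :
    ∏ k ∈ range (2 * m), f (k + 1) ^ padicValNat 2 (k + 1) =
      ∏ k ∈ range m, f (2 * (k + 1)) ^ (1 + padicValNat 2 (k + 1)) := by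
  induction m with
  | zero => simp
  | succ m ih =>
    have hodd : padicValNat 2 (2 * m + 1) = 0 := padicValNat.eq_zero_of_not_dvd (by omega)
    have heven : padicValNat 2 (2 * (m + 1)) = 1 + padicValNat 2 (m + 1) := by
      rw [padicValNat.mul two_ne_zero m.succ_ne_zero, padicValNat.self one_lt_two]
    rw [show 2 * (m + 1) = 2 * m + 1 + 1 by ring, prod_range_succ, prod_range_succ,
      prod_range_succ, ih, hodd, pow_zero, mul_one, ← heven]
    rfl

/-- `∏_{n ≥ 1} (1 + qⁿ)^ν₂(n)`. -/
noncomputable def FnegVal : PowerSeries ℤ :=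
  iProd fun k => (1 + X ^ (k + 1)) ^ padicValNat 2 (k + 1)

theorem iProdAdmissible_one_add_X_pow_succ :
    IProdAdmissible fun k => 1 + (X : PowerSeries ℤ) ^ (k + 1) :=
  .one_add_X_pow fun k => k.lt_succ_self

theorem Fneg_mul_F_one : Fneg * F 1 = F 2 := by
  rw [Fneg, F, ← iProd_mul iProdAdmissible_one_add_X_pow_succ
    (.one_sub_X_pow fun k => by omega), F]
  congr! 2 with k
  rw [one_mul, two_mul, pow_add]
  ring

theorem expand_two_F_one : expand 2 two_ne_zero (F 1) = F 2 := by
  rw [F, expand_iProd _ _ (.one_sub_X_pow fun k => by omega), F]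
  simp [pow_mul]

theorem FnegVal_eq_iProd_two_mul :
    FnegVal = iProd fun k => (1 + X ^ (2 * (k + 1))) ^ (1 + padicValNat 2 (k + 1)) := by
  ext n
  rw [FnegVal, coeff_iProd_of_lt (iProdAdmissible_one_add_X_pow_succ.pow _)
    (show n < 2 * (n + 1) by omega),
    prod_range_two_mul_pow_padicValNat (fun j => 1 + X ^ j), coeff_iProd]

theorem expand_two_Fneg_mul_FnegVal : expand 2 two_ne_zero (Fneg * FnegVal) = FnegVal := by
  have hA := iProdAdmissible_one_add_X_pow_succ
  rw [Fneg, FnegVal, ← iProd_mul hA (hA.pow _), expand_iProd _ _ (hA.mul (hA.pow _)), ← FnegVal,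
    FnegVal_eq_iProd_two_mul]
  congr! 2 with k
  simp [pow_mul, ← pow_succ', add_comm]

theorem Fneg_mul_FnegVal_mul_F_one : Fneg * FnegVal * F 1 = 1 := by
  have hfix : expand 2 two_ne_zero (Fneg * FnegVal * F 1) = Fneg * FnegVal * F 1 := by
    rw [map_mul, expand_two_Fneg_mul_FnegVal, expand_two_F_one, ← Fneg_mul_F_one]
    ring
  rw [eq_C_of_expand_eq_self one_lt_two hfix]
  simp [Fneg, F, FnegVal, constantCoeff_iProd]

theorem iProd_one_add_X_pow_pow_three_add_padicValNat :
    (iProd fun k => (1 + (X : PowerSeries ℤ) ^ (k + 1)) ^ (3 + padicValNat 2 (k + 1))) =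
      Fneg ^ 3 * FnegVal := by
  conv_lhs => enter [1, k]; rw [pow_add]
  have hA := iProdAdmissible_one_add_X_pow_succ
  rw [iProd_mul (hA.pow _) (hA.pow _), iProd_pow hA, Fneg, FnegVal]

/-- `(−q;q)∞²/(q;q)∞ = ∏_{n≥1} (1 + qⁿ)^(3 + ν₂ n)`. -/
theorem genA_eq_colored_product :
    Fneg ^ 2 * psInv (F 1) =
      iProd fun k =>
        (1 + (PowerSeries.X : PowerSeries ℤ) ^ (k + 1)) ^ (3 + padicValNat 2 (k + 1)) := by
  have hinv : F 1 * psInv (F 1) = 1 :=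
    mul_invOfUnit (F 1) 1 (by simp [F, constantCoeff_iProd])
  rw [iProd_one_add_X_pow_pow_three_add_padicValNat]
  linear_combination Fneg ^ 3 * FnegVal * hinv - Fneg ^ 2 * psInv (F 1) * Fneg_mul_FnegVal_mul_F_one
end

section
/- For all n ≥ 1, the identity 1/∏_{k≥1}(1 − q^k) = ∏_{k≥1}(1 + q^k)^{ν₂(2k)} holds as formal power series, where ν₂ is the 2-adic valuation. -/
open PowerSeries Finset

/-!
Write `m = k * 2 ^ i` with `k ≥ 1`: since `m` has exactly `ν₂ m + 1 = ν₂ (2m)` such factorizations,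
the right-hand side is `∏_{k ≥ 1} ∏_{i ≥ 0} (1 + q^(k 2^i))`, and for each `k` the inner product
telescopes against `1 - q^k`, because `(1 - x) ∏_{i < t} (1 + x^(2^i)) = 1 - x^(2^t)`.
Everything is checked modulo `X ^ (N + 1)`, where only finitely many factors matter.
-/

theorem Finset.prod_range_add_one_eq_prod_Icc {M : Type*} [CommMonoid M] (f : ℕ → M) (N : ℕ) :
    ∏ k ∈ range N, f (k + 1) = ∏ m ∈ Icc 1 N, f m := by
  rw [range_eq_Ico, prod_Ico_add', zero_add, Ico_add_one_right_eq_Icc]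

theorem one_sub_mul_prod_one_add_pow_two_pow {R : Type*} [CommRing R] (x : R) (t : ℕ) :
    (1 - x) * ∏ i ∈ range t, (1 + x ^ 2 ^ i) = 1 - x ^ 2 ^ t := by
  induction t with
  | zero => simp
  | succ t ih => rw [prod_range_succ, ← mul_assoc, ih, pow_succ, pow_mul]; ring

section SModEq

variable {A ι : Type*} [CommRing A] {I : Ideal A}

theorem SModEq.mul_right_of_smodEq_one {a b : A} (hb : b ≡ 1 [SMOD I]) : a * b ≡ a [SMOD I] := by
  simpa using (SModEq.refl a).mul hb

theorem Finset.prod_smodEq_one {s : Finset ι} {f : ι → A} (hf : ∀ i ∈ s, f i ≡ 1 [SMOD I]) :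
    ∏ i ∈ s, f i ≡ 1 [SMOD I] := by
  simpa using SModEq.prod hf

theorem Finset.prod_filter_smodEq (s : Finset ι) (p : ι → Prop) [DecidablePred p] {f : ι → A}
    (hf : ∀ i ∈ s, ¬p i → f i ≡ 1 [SMOD I]) : ∏ i ∈ s with p i, f i ≡ ∏ i ∈ s, f i [SMOD I] := by
  rw [← prod_filter_mul_prod_filter_not s p]
  refine (SModEq.mul_right_of_smodEq_one (prod_smodEq_one fun i hi => ?_)).symm
  exact hf i (mem_filter.mp hi).1 (mem_filter.mp hi).2

end SModEq

section PowerSeries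

variable {R : Type*} [CommRing R]

theorem PowerSeries.smodEq_X_pow_iff {f g : R⟦X⟧} {n : ℕ} :
    f ≡ g [SMOD Ideal.span {X ^ n}] ↔ ∀ m < n, coeff m f = coeff m g := by
  simp only [SModEq.sub_mem, Ideal.mem_span_singleton, X_pow_dvd_iff, map_sub, sub_eq_zero]

theorem PowerSeries.eq_of_forall_smodEq_X_pow {f g : R⟦X⟧}
    (h : ∀ n, f ≡ g [SMOD Ideal.span {X ^ n}]) : f = g :=
  ext fun n => smodEq_X_pow_iff.mp (h (n + 1)) n n.lt_succ_self

theorem SModEq.mono_X_pow {f g : R⟦X⟧} {m n : ℕ}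
    (hfg : f ≡ g [SMOD Ideal.span {X ^ n}]) (h : m ≤ n) : f ≡ g [SMOD Ideal.span {X ^ m}] :=
  hfg.mono (Ideal.span_singleton_le_span_singleton.mpr (pow_dvd_pow X h))

theorem PowerSeries.X_pow_smodEq_zero {m n : ℕ} (h : n ≤ m) :
    (X : R⟦X⟧) ^ m ≡ 0 [SMOD Ideal.span {X ^ n}] :=
  SModEq.zero.mpr (Ideal.mem_span_singleton.mpr (pow_dvd_pow X h))

theorem PowerSeries.one_add_X_pow_smodEq_one {m n : ℕ} (h : n ≤ m) :
    1 + (X : R⟦X⟧) ^ m ≡ 1 [SMOD Ideal.span {X ^ n}] := by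
  simpa using (SModEq.refl (1 : R⟦X⟧)).add (X_pow_smodEq_zero h)

theorem PowerSeries.one_sub_X_pow_smodEq_one {m n : ℕ} (h : n ≤ m) :
    1 - (X : R⟦X⟧) ^ m ≡ 1 [SMOD Ideal.span {X ^ n}] := by
  simpa using (SModEq.refl (1 : R⟦X⟧)).sub (X_pow_smodEq_zero h)

end PowerSeries

theorem prod_pow_padicValNat_succ_eq_prod_mul_two_pow {M : Type*} [CommMonoid M] (f : ℕ → M)
    (N : ℕ) :
    ∏ m ∈ Icc 1 N, f m ^ (padicValNat 2 m + 1) =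
      ∏ p ∈ Icc 1 N ×ˢ range (N + 1) with p.1 * 2 ^ p.2 ≤ N, f (p.1 * 2 ^ p.2) := by
  set S := (Icc 1 N).sigma fun m => range (padicValNat 2 m + 1)
  have hdiv : ∀ {p}, p ∈ S → p.1 / 2 ^ p.2 * 2 ^ p.2 = p.1 := by
    rintro ⟨m, i⟩ hp
    simp only [S, mem_sigma, mem_Icc, mem_range] at hp ⊢
    exact Nat.div_mul_cancel ((padicValNat_dvd_iff_le (by omega)).mpr (by omega))
  calc ∏ m ∈ Icc 1 N, f m ^ (padicValNat 2 m + 1)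
      = ∏ m ∈ Icc 1 N, ∏ _i ∈ range (padicValNat 2 m + 1), f m := by simp
    _ = ∏ p ∈ S, f p.1 := (prod_sigma (Icc 1 N) _ fun p => f p.1).symm
    _ = _ := by
      refine prod_nbij' (fun p => (p.1 / 2 ^ p.2, p.2)) (fun p => ⟨p.1 * 2 ^ p.2, p.2⟩)
        ?_ ?_ (fun p hp => by simp [hdiv hp]) (fun p _ => by simp) (fun p hp => by simp [hdiv hp])
      · rintro ⟨m, i⟩ hp
        have hmi := hdiv hp
        simp only [S, mem_sigma, mem_Icc, mem_range] at hp hmi ⊢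
        simp only [mem_filter, mem_product, mem_Icc, mem_range, hmi]
        have := i.lt_two_pow_self
        have := Nat.le_of_dvd (by omega) (Dvd.intro_left _ hmi)
        exact ⟨⟨⟨Nat.div_pos this (by positivity), (m.div_le_self _).trans hp.1.2⟩, by omega⟩,
          hp.1.2⟩
      · rintro ⟨k, i⟩ hp
        simp only [mem_filter, mem_product, mem_Icc, mem_range] at hp
        have hpos : 0 < k * 2 ^ i := Nat.mul_pos (by omega) (by positivity)
        simp only [S, mem_sigma, mem_Icc, mem_range]
        exact ⟨⟨hpos, hp.2⟩, Nat.lt_succ_of_le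
          ((padicValNat_dvd_iff_le hpos.ne').mp (dvd_mul_left _ _))⟩

theorem PowerSeries.prod_one_sub_X_pow_mul_prod_one_add_X_pow_smodEq_one
    (R : Type*) [CommRing R] (N : ℕ) :
    (∏ m ∈ Icc 1 N, (1 - (X : R⟦X⟧) ^ m)) *
        ∏ m ∈ Icc 1 N, (1 + (X : R⟦X⟧) ^ m) ^ padicValNat 2 (2 * m) ≡
      1 [SMOD Ideal.span {X ^ (N + 1)}] := by
  have hval : ∀ m ∈ Icc 1 N, padicValNat 2 (2 * m) = padicValNat 2 m + 1 := fun m hm => by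
    rw [mem_Icc] at hm
    rw [padicValNat.mul two_ne_zero (by omega), padicValNat.self one_lt_two, add_comm]
  have hfill : ∏ m ∈ Icc 1 N, (1 + (X : R⟦X⟧) ^ m) ^ padicValNat 2 (2 * m) ≡
      ∏ k ∈ Icc 1 N, ∏ i ∈ range (N + 1), (1 + ((X : R⟦X⟧) ^ k) ^ 2 ^ i)
        [SMOD Ideal.span {X ^ (N + 1)}] := by
    rw [prod_congr rfl fun m hm => by rw [hval m hm],
      prod_pow_padicValNat_succ_eq_prod_mul_two_pow (fun m => 1 + X ^ m)]
    refine (prod_filter_smodEq _ _ fun p _ hp => ?_).trans ?_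
    · exact one_add_X_pow_smodEq_one (not_le.mp hp)
    · simp only [prod_product, pow_mul]
      exact SModEq.rfl
  have hkill : ∀ k ∈ Icc 1 N,
      1 - (X : R⟦X⟧) ^ (k * 2 ^ (N + 1)) ≡ 1 [SMOD Ideal.span {X ^ (N + 1)}] :=
    fun k hk => one_sub_X_pow_smodEq_one <|
      (N + 1).lt_two_pow_self.le.trans (Nat.le_mul_of_pos_left _ (mem_Icc.mp hk).1)
  calc _ ≡ ∏ k ∈ Icc 1 N, ((1 - X ^ k) * ∏ i ∈ range (N + 1), (1 + ((X : R⟦X⟧) ^ k) ^ 2 ^ i))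
          [SMOD Ideal.span {X ^ (N + 1)}] := by
        rw [prod_mul_distrib]; exact SModEq.rfl.mul hfill
    _ = ∏ k ∈ Icc 1 N, (1 - X ^ (k * 2 ^ (N + 1))) := by
        simp_rw [one_sub_mul_prod_one_add_pow_two_pow, ← pow_mul]
    _ ≡ 1 [SMOD Ideal.span {X ^ (N + 1)}] := by
        simpa using SModEq.prod hkill

theorem iProd_smodEq_prod_range {g : ℕ → ℤ⟦X⟧}
    (hg : ∀ k, g k ≡ 1 [SMOD Ideal.span {X ^ (k + 1)}]) (N : ℕ) :
    iProd g ≡ ∏ k ∈ range N, g k [SMOD Ideal.span {X ^ N}] := by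
  refine smodEq_X_pow_iff.mpr fun m hm => ?_
  rw [iProd, coeff_mk]
  refine smodEq_X_pow_iff.mp ?_ m m.lt_succ_self
  rw [← prod_range_mul_prod_Ico g hm]
  refine (SModEq.mul_right_of_smodEq_one (prod_smodEq_one fun k hk => ?_)).symm
  exact (hg k).mono_X_pow (by simp at hk; omega)

/-- `1/∏_{k≥1}(1 − q^k) = ∏_{k≥1}(1 + q^k)^(ν₂ (2k))`. -/
theorem inv_euler_eq_product :
    psInv (F 1) =
      iProd fun k =>
        (1 + (PowerSeries.X : PowerSeries ℤ) ^ (k + 1)) ^ (padicValNat 2 (2 * (k + 1))) := by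
  set G := fun k => (1 + (X : ℤ⟦X⟧) ^ (k + 1)) ^ padicValNat 2 (2 * (k + 1))
  have hF : ∀ N, F 1 ≡ ∏ m ∈ Icc 1 N, (1 - X ^ m) [SMOD Ideal.span {X ^ N}] := fun N => by
    have h1 (k : ℕ) : 1 - (X : ℤ⟦X⟧) ^ (1 * (k + 1)) ≡ 1 [SMOD Ideal.span {X ^ (k + 1)}] :=
      one_sub_X_pow_smodEq_one (one_mul _).ge
    rw [← prod_range_add_one_eq_prod_Icc]
    simpa only [F, one_mul] using iProd_smodEq_prod_range h1 N
  have hG : ∀ N, iProd G ≡ ∏ m ∈ Icc 1 N, (1 + X ^ m) ^ padicValNat 2 (2 * m)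
      [SMOD Ideal.span {X ^ N}] := fun N => by
    have h1 (k : ℕ) : G k ≡ 1 [SMOD Ideal.span {X ^ (k + 1)}] := by
      simpa only [one_pow] using (one_add_X_pow_smodEq_one (R := ℤ) (le_refl (k + 1))).pow _
    rw [← prod_range_add_one_eq_prod_Icc]
    exact iProd_smodEq_prod_range h1 N
  have hmul : F 1 * iProd G = 1 := eq_of_forall_smodEq_X_pow fun N =>
    ((hF N).mul (hG N)).trans
      ((prod_one_sub_X_pow_mul_prod_one_add_X_pow_smodEq_one ℤ N).mono_X_pow N.le_succ)
  have hF0 : constantCoeff (F 1) = 1 := by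
    rw [← coeff_zero_eq_constantCoeff_apply, smodEq_X_pow_iff.mp (hF 1) 0 one_pos]
    simp
  exact left_inv_eq_right_inv (by rw [mul_comm]; exact mul_invOfUnit _ 1 hF0) hmul
end

section
/- Let a(n) be defined by ∑_{n≥0} a(n) qⁿ = (−q;q)∞²/(q;q)∞, and let ω_k denote the generalized pentagonal numbers. Then a(n) is even if and only if n is not a generalized pentagonal number. -/
open PowerSeries Finset

/-- `a n` is the coefficient of `q^n` in `(-q;q)_∞^2 / (q;q)_∞`. -/
noncomputable def a (n : ℕ) : ℤ := PowerSeries.coeff n (Fneg ^ 2 * psInv (F 1))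

/-! Modulo 2 the factors `1 - qᵏ` and `1 + qᵏ` agree, so `(-q;q)∞ ≡ (q;q)∞` and
`(-q;q)∞² / (q;q)∞ ≡ (q;q)∞`. By Euler's pentagonal number theorem the coefficient of `qⁿ` in
`(q;q)∞` is `±1` when `n` is a generalized pentagonal number and `0` otherwise. -/

namespace PowerSeries

variable {R : Type*} [CommRing R]

theorem coeff_mul_eq_of_X_pow_dvd_sub_one {f g : R⟦X⟧} {n : ℕ} (hg : X ^ (n + 1) ∣ g - 1) :
    coeff n (f * g) = coeff n f := by
  obtain ⟨h, hh⟩ := hg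
  rw [show g = 1 + X ^ (n + 1) * h by rw [← hh]; ring, mul_add, mul_one, map_add,
    mul_left_comm, coeff_X_pow_mul', if_neg (by omega), add_zero]

theorem X_pow_dvd_prod_sub_one {ι : Type*} {s : Finset ι} {g : ι → R⟦X⟧} {n : ℕ}
    (hg : ∀ i ∈ s, X ^ n ∣ g i - 1) : X ^ n ∣ ∏ i ∈ s, g i - 1 := by
  refine Finset.prod_induction g (fun p => X ^ n ∣ p - 1) (fun p q hp hq => ?_) (by simp) hg
  rw [show p * q - 1 = p * (q - 1) + (p - 1) by ring]
  exact dvd_add (dvd_mul_of_dvd_right hq p) hp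

theorem coeff_prod_eq_of_subset {ι : Type*} [DecidableEq ι] {s t : Finset ι} (hst : s ⊆ t)
    {g : ι → R⟦X⟧} {n : ℕ} (hg : ∀ i ∈ t \ s, X ^ (n + 1) ∣ g i - 1) :
    coeff n (∏ i ∈ t, g i) = coeff n (∏ i ∈ s, g i) := by
  rw [← Finset.prod_sdiff hst, mul_comm,
    coeff_mul_eq_of_X_pow_dvd_sub_one (X_pow_dvd_prod_sub_one hg)]

theorem even_coeff_pentagonalSeries_iff {n : ℕ} :
    Even (coeff n (pentagonalSeries ℤ)) ↔ n ∉ Set.range pentagonal := by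
  constructor
  · rintro h ⟨k, rfl⟩
    rcases Int.units_eq_one_or k.negOnePow with hk | hk <;> simp_all
  · intro h
    simp [coeff_pentagonalSeries_eq_zero ℤ h]

end PowerSeries

theorem mem_range_pentagonal_iff {n : ℕ} :
    n ∈ Set.range pentagonal ↔ ∃ k : ℤ, 2 * (n : ℤ) = k * (3 * k + 1) := by
  constructor
  · rintro ⟨j, rfl⟩
    exact ⟨-j, by rw [← two_mul_natCast_pentagonal_neg, neg_neg]⟩
  · rintro ⟨k, hk⟩
    have := two_mul_natCast_pentagonal_neg k
    exact ⟨-k, by omega⟩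

theorem map_iProd_congr {R : Type*} [CommRing R] (f : ℤ →+* R) {g h : ℕ → ℤ⟦X⟧}
    (hgh : ∀ k, map f (g k) = map f (h k)) : map f (iProd g) = map f (iProd h) := by
  ext n
  have : map f (∏ k ∈ range (n + 1), g k) = map f (∏ k ∈ range (n + 1), h k) := by
    simp only [map_prod, hgh]
  simpa only [iProd, coeff_map, coeff_mk] using congrArg (coeff n) this

theorem coeff_F_one (n : ℕ) : coeff n (F 1) = coeff n (pentagonalSeries ℤ) := by
  obtain ⟨s, hs, hrange⟩ := ((coeff_prod_one_sub_X_pow_eventually_eq ℤ n).and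
    (Filter.eventually_ge_atTop (range (n + 1)))).exists
  rw [← hs, coeff_prod_eq_of_subset hrange, F, iProd, coeff_mk]
  · simp only [one_mul]
  · intro k hk
    have : n < k := by simpa using (Finset.mem_sdiff.1 hk).2
    simpa using pow_dvd_pow (X : ℤ⟦X⟧) (by omega : n + 1 ≤ k + 1)

theorem map_F_one_eq_map_Fneg :
    map (Int.castRingHom (ZMod 2)) (F 1) = map (Int.castRingHom (ZMod 2)) Fneg :=
  map_iProd_congr _ fun k => by
    ext m
    rw [coeff_map, coeff_map, one_mul]
    exact (ZMod.intCast_eq_intCast_iff_dvd_sub _ _ 2).2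
      ⟨coeff m (X ^ (k + 1)), by rw [map_add, map_sub]; push_cast; ring⟩

theorem F_one_mul_psInv : F 1 * psInv (F 1) = 1 :=
  mul_invOfUnit _ _ (by simp [F, iProd])

theorem even_a_sub_coeff_F_one (n : ℕ) : Even (a n - coeff n (F 1)) := by
  have h : map (Int.castRingHom (ZMod 2)) (Fneg ^ 2 * psInv (F 1)) =
      map (Int.castRingHom (ZMod 2)) (F 1) := by
    rw [map_mul, map_pow, ← map_F_one_eq_map_Fneg, sq, mul_assoc, ← map_mul, F_one_mul_psInv,
      map_one, mul_one]
  have hn := congrArg (coeff n) h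
  rw [coeff_map, coeff_map] at hn
  rw [← ZMod.intCast_eq_zero_iff_even, Int.cast_sub, sub_eq_zero]
  exact hn

/-- `a n` is even iff `n` is not a generalized pentagonal number. -/
theorem a_even_iff_not_pentagonal (n : ℕ) :
    Even (a n) ↔ ¬ ∃ k : ℤ, (2 * n : ℤ) = k * (3 * k + 1) := by
  rw [← mem_range_pentagonal_iff, ← even_coeff_pentagonalSeries_iff, ← coeff_F_one]
  exact Int.even_sub.1 (even_a_sub_coeff_F_one n)
end

section
/- Let a(n) be defined by ∑_{n≥0} a(n) qⁿ = (−q;q)∞²/(q;q)∞. Then ∑_{n≥0} a(n) qⁿ ≡ (q;q)∞ (mod 4), i.e., a(n) is congruent modulo 4 to the n-th coefficient of Euler's product ∏_{k≥1}(1 − qᵏ). -/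
open PowerSeries Finset

/-!
Since `(1 + x)² - (1 - x)² = 4x`, the partial products satisfy
`∏ (1 + qᵏ)² ≡ ∏ (1 - qᵏ)² (mod 4)`, and the infinite products agree with the partial
products to any given `q`-adic order. Hence `(-q;q)∞² ≡ (q;q)∞² (mod 4)`, and dividing by
`(q;q)∞` gives the congruence.
-/

theorem PowerSeries.eq_zero_of_forall_X_pow_dvd {R : Type*} [Semiring R] {f : R⟦X⟧}
    (h : ∀ m, X ^ m ∣ f) : f = 0 := by
  ext n
  exact X_pow_dvd_iff.mp (h (n + 1)) n (lt_add_one n)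

theorem X_pow_dvd_prod_range_sub_prod_range {R : Type*} [CommRing R] {g : ℕ → R⟦X⟧}
    (hg : ∀ k, X ^ (k + 1) ∣ g k - 1) {m m' : ℕ} (h : m ≤ m') :
    X ^ m ∣ ∏ k ∈ range m', g k - ∏ k ∈ range m, g k := by
  induction m', h using Nat.le_induction with
  | base => simp
  | succ m' hm ih =>
    have split : ∏ k ∈ range (m' + 1), g k - ∏ k ∈ range m, g k =
        (∏ k ∈ range m', g k - ∏ k ∈ range m, g k) + (∏ k ∈ range m', g k) * (g m' - 1) := by
      rw [prod_range_succ]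
      ring
    rw [split]
    exact ih.add (((pow_dvd_pow X (by omega)).trans (hg m')).mul_left _)

theorem X_pow_dvd_iProd_sub_prod_range {g : ℕ → ℤ⟦X⟧} (hg : ∀ k, X ^ (k + 1) ∣ g k - 1)
    (m : ℕ) : X ^ m ∣ iProd g - ∏ k ∈ range m, g k := by
  refine X_pow_dvd_iff.mpr fun i hi => ?_
  have hstable := X_pow_dvd_iff.mp
    (X_pow_dvd_prod_range_sub_prod_range hg (Nat.succ_le_of_lt hi)) i (lt_add_one i)
  rw [map_sub, sub_eq_zero] at hstable ⊢
  rw [iProd, coeff_mk, hstable]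

theorem sq_prod_one_add_eq_sq_prod_one_sub {ι R : Type*} [CommRing R] (h4 : (4 : R) = 0)
    (s : Finset ι) (x : ι → R) :
    (∏ i ∈ s, (1 + x i)) ^ 2 = (∏ i ∈ s, (1 - x i)) ^ 2 := by
  rw [← prod_pow, ← prod_pow]
  exact prod_congr rfl fun i _ => by linear_combination x i * h4

theorem map_Fneg_sq_eq_map_F_one_sq {S : Type*} [CommRing S] (φ : ℤ →+* S) (h4 : (4 : S) = 0) :
    map φ (Fneg ^ 2) = map φ (F 1 ^ 2) := by
  rw [← sub_eq_zero, ← map_sub]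
  refine eq_zero_of_forall_X_pow_dvd fun m => ?_
  set P := ∏ k ∈ range m, (1 + (X : ℤ⟦X⟧) ^ (k + 1))
  set Q := ∏ k ∈ range m, (1 - (X : ℤ⟦X⟧) ^ (1 * (k + 1)))
  have hP : X ^ m ∣ Fneg ^ 2 - P ^ 2 :=
    (X_pow_dvd_iProd_sub_prod_range (by simp) m).trans (sub_dvd_pow_sub_pow _ _ 2)
  have hQ : X ^ m ∣ F 1 ^ 2 - Q ^ 2 :=
    (X_pow_dvd_iProd_sub_prod_range (by simp) m).trans (sub_dvd_pow_sub_pow _ _ 2)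
  have hPQ : map φ (P ^ 2) = map φ (Q ^ 2) := by
    simp only [P, Q, map_pow, map_prod, map_add, map_sub, map_one, map_X, one_mul]
    exact sq_prod_one_add_eq_sq_prod_one_sub (by rw [← map_ofNat C 4, h4, map_zero]) _ _
  have hsplit : Fneg ^ 2 - F 1 ^ 2 = (Fneg ^ 2 - P ^ 2) - (F 1 ^ 2 - Q ^ 2) + (P ^ 2 - Q ^ 2) := by
    ring
  rw [hsplit, map_add, map_sub (map φ), map_sub (map φ) (P ^ 2), hPQ, sub_self, add_zero]
  simpa using map_dvd (map φ) (hP.sub hQ)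

/-- `∑ a(n) qⁿ ≡ (q;q)∞ (mod 4)`, coefficientwise. -/
theorem a_congruent_euler_mod_four (n : ℕ) :
    (4 : ℤ) ∣ (a n - PowerSeries.coeff n (F 1)) := by
  set φ := Int.castRingHom (ZMod 4)
  have hmap : map φ (Fneg ^ 2 * psInv (F 1)) = map φ (F 1) := by
    rw [map_mul, map_Fneg_sq_eq_map_F_one_sq φ (by decide), ← map_mul, sq, mul_assoc,
      F_one_mul_psInv, mul_one]
  have hcoeff := congrArg (coeff n) hmap
  rw [coeff_map, coeff_map] at hcoeff
  exact (ZMod.intCast_zmod_eq_zero_iff_dvd _ 4).mp (by simpa [sub_eq_zero, a] using hcoeff)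
end
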